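/- Let h : ℂ^N → ℝ be convex, let W ∈ ℂ^{N×N} be Hermitian positive definite, let C ⊆ ℂ^N be a nonempty closed convex set, let x ∈ C and g ∈ ℂ^N. Then for any α₁ ≥ α₂ > 0 it holds that D_h^C(x, g, W, α₂) ≥ D_h^C(x, g, W, α₁). -/

import Mathlib

open scoped ComplexOrder

noncomputable section

/-- `ℂ^N` with the standard complex inner product (conjugate-linear in the
first argument) and the induced norm. -/
abbrev EC (N : ℕ) := EuclideanSpace ℂ (Fin N)

/-- Weighted squared norm `‖z‖_W² = zᴴ W z` (its real part, which is the full
value when `W` is Hermitian). -/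
def wnorm2 {N : ℕ} (W : Matrix (Fin N) (Fin N) ℂ) (z : EC N) : ℝ :=
  (dotProduct (fun i => starRingEnd ℂ (z i)) (W.mulVec (fun i => z i))).re

/-- Surrogate `S_h(x̄, x, g, W, α) = Re⟨g, x̄ − x⟩ + (1/(2α))‖x̄ − x‖_W² + h(x̄) − h(x)`. -/
def Sh {N : ℕ} (h : EC N → ℝ) (W : Matrix (Fin N) (Fin N) ℂ) (α : ℝ)
    (g x xb : EC N) : ℝ :=
  (inner ℂ g (xb - x) : ℂ).re + (1 / (2 * α)) * wnorm2 W (xb - x) + h xb - h x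

/-- `D_h^C(x, g, W, α) = −(2/α)·inf_{x̄ ∈ C} S_h(x̄, x, g, W, α)`. -/
def Dh {N : ℕ} (h : EC N → ℝ) (C : Set (EC N)) (W : Matrix (Fin N) (Fin N) ℂ)
    (α : ℝ) (g x : EC N) : ℝ :=
  -(2 / α) * sInf ((fun xb => Sh h W α g x xb) '' C)

/-- The real-linear continuous functional `d ↦ Re⟨g, d⟩`, used to say that a
real-differentiable `f : ℂ^N → ℝ` has gradient `g` at a point. -/
def gradDual {N : ℕ} (g : EC N) : EC N →L[ℝ] ℝ :=
  Complex.reCLM.comp ((innerSL ℂ g).restrictScalars ℝ)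

/-- The rank-one matrix `u·uᴴ` with entries `uᵢ · conj(uⱼ)`. -/
def rankOne {N : ℕ} (u : EC N) : Matrix (Fin N) (Fin N) ℂ :=
  Matrix.vecMulVec (fun i => u i) (fun i => starRingEnd ℂ (u i))

end

/-!
Put `τ = α₂ / α₁ ∈ (0, 1]`. Moving a competitor `x̄ ∈ C` towards `x` to `x + τ (x̄ - x) ∈ C`
scales the linear term by `τ`, the quadratic term by `τ²` (which the smaller stepsize `α₂ = τ α₁`
turns back into `τ`), and by convexity the `h`-difference by at most `τ`. Hence
`inf S(·, α₂) ≤ τ · inf S(·, α₁)`, which after multiplying by `-2 / α₂` is the claim.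
-/

section Surrogate

variable {N : ℕ} (h : EC N → ℝ) (W : Matrix (Fin N) (Fin N) ℂ) (g x : EC N)

lemma wnorm2_nonneg {W : Matrix (Fin N) (Fin N) ℂ} (hW : W.PosSemidef) (z : EC N) :
    0 ≤ wnorm2 W z := by
  simpa [wnorm2, dotProduct, star, Pi.star_def] using hW.re_dotProduct_nonneg (fun i => z i)

lemma wnorm2_smul (r : ℝ) (z : EC N) : wnorm2 W (r • z) = r ^ 2 * wnorm2 W z := by
  have hconj : (fun i => starRingEnd ℂ ((r • z) i)) = (r : ℂ) • fun i => starRingEnd ℂ (z i) := by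
    funext i
    simp [Complex.real_smul]
  have hvec : (fun i => (r • z) i) = (r : ℂ) • fun i => z i := by
    funext i
    simp [Complex.real_smul]
  rw [wnorm2, hconj, hvec, Matrix.mulVec_smul, smul_dotProduct, dotProduct_smul, smul_smul,
    ← Complex.ofReal_mul, ← pow_two, smul_eq_mul, Complex.re_ofReal_mul, wnorm2]

lemma Sh_le_Sh_of_le {W : Matrix (Fin N) (Fin N) ℂ} (hW : W.PosSemidef) {α₁ α₂ : ℝ}
    (hα₂ : 0 < α₂) (hα : α₂ ≤ α₁) (xb : EC N) : Sh h W α₁ g x xb ≤ Sh h W α₂ g x xb := by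
  unfold Sh
  gcongr
  exact wnorm2_nonneg hW _

lemma Sh_add_smul_sub_le (hconv : ConvexOn ℝ Set.univ h) (α : ℝ) {τ : ℝ} (hτ₀ : 0 ≤ τ)
    (hτ₁ : τ ≤ 1) (xb : EC N) :
    Sh h W (τ * α) g x (x + τ • (xb - x)) ≤ τ * Sh h W α g x xb := by
  have hseg : x + τ • (xb - x) = (1 - τ) • x + τ • xb := by
    rw [smul_sub, sub_smul, one_smul]; abel
  have hh : h (x + τ • (xb - x)) ≤ (1 - τ) * h x + τ * h xb := by
    rw [hseg]
    exact hconv.2 (Set.mem_univ x) (Set.mem_univ xb) (by linarith) hτ₀ (by ring)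
  have hlin : (inner ℂ g (τ • (xb - x)) : ℂ).re = τ * (inner ℂ g (xb - x) : ℂ).re := by
    rw [← Complex.coe_smul, inner_smul_right, Complex.re_ofReal_mul]
  -- `τ² / (2 τ α) = τ / (2 α)`, also when `τ = 0` or `α = 0` thanks to `1 / 0 = 0`
  have hquad : 1 / (2 * (τ * α)) * τ ^ 2 = τ * (1 / (2 * α)) := by
    rcases eq_or_ne τ 0 with rfl | _
    · simp
    rcases eq_or_ne α 0 with rfl | _
    · simp
    field_simp
  unfold Sh
  rw [add_sub_cancel_left, hlin, wnorm2_smul, ← mul_assoc, hquad]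
  linarith

end Surrogate

/-- `hle` makes `f '' s` and `g '' s` bounded below together, so the junk value `sInf = 0` of a
set of reals that is not bounded below appears on both sides at once. -/
lemma Real.sInf_image_le_mul_sInf_image {α : Type*} {s : Set α} {f g : α → ℝ} {τ : ℝ}
    (hτ : 0 < τ) (hs : s.Nonempty) (hle : ∀ a ∈ s, f a ≤ g a)
    (hscale : ∀ a ∈ s, ∃ b ∈ s, g b ≤ τ * f a) :
    sInf (g '' s) ≤ τ * sInf (f '' s) := by
  by_cases hf : BddBelow (f '' s)
  · have hg : BddBelow (g '' s) := by
      obtain ⟨m, hm⟩ := hf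
      exact ⟨m, Set.forall_mem_image.2 fun a ha => (hm ⟨a, ha, rfl⟩).trans (hle a ha)⟩
    rw [← div_le_iff₀' hτ]
    refine le_csInf (hs.image f) (Set.forall_mem_image.2 fun a ha => ?_)
    obtain ⟨b, hb, hgb⟩ := hscale a ha
    rw [div_le_iff₀' hτ]
    exact (csInf_le hg ⟨b, hb, rfl⟩).trans hgb
  · have hg : ¬ BddBelow (g '' s) := by
      rintro ⟨m, hm⟩
      refine hf ⟨m / τ, Set.forall_mem_image.2 fun a ha => ?_⟩
      obtain ⟨b, hb, hgb⟩ := hscale a ha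
      rw [div_le_iff₀' hτ]
      exact (hm ⟨b, hb, rfl⟩).trans hgb
    simp [Real.sInf_of_not_bddBelow hf, Real.sInf_of_not_bddBelow hg]

theorem stmt3_general {N : ℕ} (h : EC N → ℝ) (hconv : ConvexOn ℝ Set.univ h)
    (W : Matrix (Fin N) (Fin N) ℂ) (hW : W.PosDef)
    (C : Set (EC N)) (hCcv : Convex ℝ C)
    (x : EC N) (hx : x ∈ C) (g : EC N)
    (α₁ α₂ : ℝ) (hα₂ : 0 < α₂) (hα : α₂ ≤ α₁) :
    Dh h C W α₂ g x ≥ Dh h C W α₁ g x := by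
  have hα₁ : 0 < α₁ := hα₂.trans_le hα
  set τ := α₂ / α₁
  have hτ₀ : 0 < τ := div_pos hα₂ hα₁
  have hτ₁ : τ ≤ 1 := (div_le_one hα₁).2 hα
  have hτα : τ * α₁ = α₂ := div_mul_cancel₀ α₂ hα₁.ne'
  have hinf : sInf ((fun xb => Sh h W α₂ g x xb) '' C)
      ≤ τ * sInf ((fun xb => Sh h W α₁ g x xb) '' C) := by
    refine Real.sInf_image_le_mul_sInf_image hτ₀ ⟨x, hx⟩
      (fun xb _ => Sh_le_Sh_of_le h g x hW.posSemidef hα₂ hα xb) fun xb hxb => ?_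
    have hstep := Sh_add_smul_sub_le h W g x hconv α₁ hτ₀.le hτ₁ xb
    rw [hτα] at hstep
    exact ⟨x + τ • (xb - x), hCcv.add_smul_sub_mem hx hxb ⟨hτ₀.le, hτ₁⟩, hstep⟩
  have hcoef : 2 / α₂ * τ = 2 / α₁ := by
    rw [← hτα]
    field_simp
  unfold Dh
  calc -(2 / α₁) * sInf ((fun xb => Sh h W α₁ g x xb) '' C)
      = -(2 / α₂) * (τ * sInf ((fun xb => Sh h W α₁ g x xb) '' C)) := by
        rw [neg_mul, neg_mul, ← mul_assoc, hcoef]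
    _ ≤ -(2 / α₂) * sInf ((fun xb => Sh h W α₂ g x xb) '' C) :=
        mul_le_mul_of_nonpos_left hinf (neg_nonpos.2 (by positivity))

/-- Monotonicity of `D_h^C` in the stepsize. For `h` convex,
`W` Hermitian positive definite, `C` nonempty closed convex, `x ∈ C`,
`g ∈ ℂ^N`, and `α₁ ≥ α₂ > 0`, one has
`D_h^C(x, g, W, α₂) ≥ D_h^C(x, g, W, α₁)`. -/
theorem stmt3 {N : ℕ} (h : EC N → ℝ) (hconv : ConvexOn ℝ Set.univ h)
    (W : Matrix (Fin N) (Fin N) ℂ) (hW : W.PosDef)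
    (C : Set (EC N)) (hCne : C.Nonempty) (hCcl : IsClosed C) (hCcv : Convex ℝ C)
    (x : EC N) (hx : x ∈ C) (g : EC N)
    (α₁ α₂ : ℝ) (hα₂ : 0 < α₂) (hα : α₂ ≤ α₁) :
    Dh h C W α₂ g x ≥ Dh h C W α₁ g x :=
  stmt3_general h hconv W hW C hCcv x hx g α₁ α₂ hα₂ hα
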